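/- arXiv:2005.11601 — 2 statements merged into one kernel-verified Lean document; each statement's English description precedes it below -/
import Mathlib

section
/- Let u and v be integers and set P = R(u, 2) = (1/2)·[[u, −(u²+4)], [1, −u]] and Q = R(v, 1) = [[v, −(v²+1)], [1, −v]] in SL(2,ℝ). Then tr(P·Q) = −((v−u)² + 5)/2, and (tr(P·Q))² is an integer if and only if v − u is odd. -/
noncomputable section

open Matrix

abbrev SL2R := Matrix.SpecialLinearGroup (Fin 2) ℝ

/-- `R x y` is the rotation by `π` about the point `x + iy` of the upper half-plane,
`(1/y)·[[x, −(x²+y²)], [1, −x]] ∈ SL(2,ℝ)`. -/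
def R (x y : ℝ) (hy : 0 < y) : SL2R :=
  ⟨(1 / y) • !![x, -(x ^ 2 + y ^ 2); 1, -x], by
    have hne : y ≠ 0 := hy.ne'
    rw [Matrix.det_smul]
    simp only [Matrix.det_fin_two_of, Fintype.card_fin]
    field_simp
    ring⟩

/-- For integers `u, v`, with `P = R(u,2)` and `Q = R(v,1)` the rotations by `π`
about `u+2i` and `v+i`, one has `tr(P·Q) = −((v−u)² + 5)/2`, and `(tr(P·Q))²` is
an integer if and only if `v − u` is odd. -/
theorem trace_product_rotations (u v : ℤ) :
    Matrix.trace ((R (u : ℝ) 2 two_pos * R (v : ℝ) 1 one_pos : SL2R) :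
        Matrix (Fin 2) (Fin 2) ℝ) = -(((v : ℝ) - (u : ℝ)) ^ 2 + 5) / 2 ∧
    ((∃ z : ℤ, (Matrix.trace ((R (u : ℝ) 2 two_pos * R (v : ℝ) 1 one_pos : SL2R) :
        Matrix (Fin 2) (Fin 2) ℝ)) ^ 2 = (z : ℝ)) ↔ Odd (v - u)) := by
  have htr : Matrix.trace ((R (u : ℝ) 2 two_pos * R (v : ℝ) 1 one_pos : SL2R) :
      Matrix (Fin 2) (Fin 2) ℝ) = -(((v : ℝ) - (u : ℝ)) ^ 2 + 5) / 2 := by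
    show Matrix.trace ((R (u : ℝ) 2 two_pos : Matrix (Fin 2) (Fin 2) ℝ) *
        (R (v : ℝ) 1 one_pos : Matrix (Fin 2) (Fin 2) ℝ)) = _
    simp only [R, Matrix.trace_fin_two, Matrix.mul_apply, Fin.sum_univ_two,
      Matrix.smul_apply, Matrix.of_apply, Matrix.cons_val', Matrix.cons_val_zero,
      Matrix.cons_val_one, Matrix.head_cons, Matrix.head_fin_const, Matrix.empty_val',
      Matrix.cons_val_fin_one, smul_eq_mul]
    ring
  refine ⟨htr, ?_⟩
  rw [htr]
  set d : ℤ := v - u with hd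
  have hcast : (((v : ℝ) - (u : ℝ)) ^ 2 + 5) = ((d ^ 2 + 5 : ℤ) : ℝ) := by
    push_cast [hd]; ring
  constructor
  · rintro ⟨z, hz⟩
    have : ((d ^ 2 + 5 : ℤ) : ℝ) ^ 2 = ((4 * z : ℤ) : ℝ) := by
      rw [← hcast]; push_cast
      field_simp at hz ⊢
      linarith [hz]
    have h4 : (d ^ 2 + 5) ^ 2 = 4 * z := by exact_mod_cast this
    by_contra hodd
    rw [Int.not_odd_iff_even] at hodd
    have hodd1 : Odd (d ^ 2 + 5) := by
      rcases hodd with ⟨k, hk⟩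
      exact ⟨2 * k ^ 2 + 2, by rw [hk]; ring⟩
    have hodd2 : Odd ((d ^ 2 + 5) ^ 2) := hodd1.pow
    rw [h4, Int.odd_iff] at hodd2
    omega
  · rintro ⟨k, hk⟩
    refine ⟨(2 * k ^ 2 + 2 * k + 3) ^ 2, ?_⟩
    have : ((v : ℝ) - (u : ℝ)) = ((2 * k + 1 : ℤ) : ℝ) := by
      have : d = 2 * k + 1 := hk
      push_cast [← this, hd]; ring
    rw [this]; push_cast; ring
end
end

section
/- For all integers m ≥ 1 and n ≥ 1 with m = 1 or n = 1, the jigsaw group Γ_{m,n} is not commensurable with SL(2,ℤ) as subgroups of SL(2,ℝ); that is, Γ_{m,n} ∩ SL(2,ℤ) has infinite index in Γ_{m,n} or in SL(2,ℤ). -/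
noncomputable section

open Matrix

/-- The generators `ρ₀, ρ₁, …, ρ_{m+n+1}` of the jigsaw group `Γ_{m,n}`:
`jigGen m n k` is `ρ_k` (for `k ≤ m+n+1`). -/
def jigGen (m n : ℕ) (k : ℕ) : SL2R :=
  if k = 0 then R (-(m : ℝ)) 1 one_pos
  else if k ≤ m then R (-(m : ℝ) + (k : ℝ) - 1 / 2) (1 / 2) (by norm_num)
  else if k ≤ m + n then
    if (k - m) % 3 = 1 then R (2 * ((k - m : ℕ) : ℝ) - 9 / 5) (2 / 5) (by norm_num)
    else if (k - m) % 3 = 2 then R (2 * ((k - m : ℕ) : ℝ) - 1) 2 (by norm_num)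
    else R (2 * ((k - m : ℕ) : ℝ) - 1 / 5) (2 / 5) (by norm_num)
  else
    if n % 3 = 1 then R (2 * (n : ℝ) - 1) 2 (by norm_num)
    else if n % 3 = 2 then R (2 * (n : ℝ) + 1) 2 (by norm_num)
    else R (2 * (n : ℝ)) 1 one_pos

/-- The jigsaw group `Γ_{m,n} ≤ SL(2,ℝ)`, generated by `ρ₀, …, ρ_{m+n+1}`. -/
def JGamma (m n : ℕ) : Subgroup SL2R :=
  Subgroup.closure (jigGen m n '' Set.Iic (m + n + 1))

/-- `SL(2,ℤ)` viewed as a subgroup of `SL(2,ℝ)` via entrywise inclusion of `ℤ` in `ℝ`. -/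
def SL2Zinℝ : Subgroup SL2R :=
  (Matrix.SpecialLinearGroup.map (n := Fin 2) (Int.castRingHom ℝ)).range

/-! The product `g = ρ_m ρ_{m+1}` lies in `Γ_{m,n}` and equals `½ M` with `M = [[-6, 2], [7, -3]]`
integral. Modulo 2, `M` is an idempotent of trace 1, so every `tr (M ^ d)` is odd and
`tr (g ^ d) = tr (M ^ d) / 2 ^ d` is not an integer for `d ≥ 1`. Hence no positive power of `g` lies
in `SL(2,ℤ)`, whereas a finite relative index of `SL(2,ℤ) ∩ Γ_{m,n}` in `Γ_{m,n}` would put one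
there. -/

lemma Matrix.trace_map_intCast_pow {ι R : Type*} [Fintype ι] [DecidableEq ι] [CommRing R]
    (A : Matrix ι ι ℤ) (d : ℕ) :
    (((A ^ d).trace : ℤ) : R) = ((A.map (Int.cast : ℤ → R)) ^ d).trace := by
  rw [← eq_intCast (Int.castRingHom R), AddMonoidHom.map_trace, A.map_pow]
  rfl

lemma Matrix.odd_trace_pow_of_isIdempotentElem_map_zmod_two {ι : Type*} [Fintype ι]
    [DecidableEq ι] {A : Matrix ι ι ℤ} (hA : IsIdempotentElem (A.map (Int.cast : ℤ → ZMod 2)))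
    (htr : Odd A.trace) {d : ℕ} (hd : d ≠ 0) : Odd (A ^ d).trace := by
  rw [← ZMod.intCast_eq_one_iff_odd] at htr ⊢
  rw [trace_map_intCast_pow, hA.pow_eq hd, ← htr, ← pow_one (A.map _), ← trace_map_intCast_pow,
    pow_one]

lemma exists_trace_eq_intCast_of_mem_SL2Zinℝ {g : SL2R} (hg : g ∈ SL2Zinℝ) :
    ∃ k : ℤ, (g : Matrix (Fin 2) (Fin 2) ℝ).trace = k := by
  obtain ⟨B, rfl⟩ := hg
  exact ⟨(B : Matrix (Fin 2) (Fin 2) ℤ).trace,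
    (AddMonoidHom.map_trace (Int.castRingHom ℝ) _).symm⟩

lemma pow_notMem_SL2Zinℝ_of_coe_eq_inv_two_smul {g : SL2R} {A : Matrix (Fin 2) (Fin 2) ℤ}
    (hg : (g : Matrix (Fin 2) (Fin 2) ℝ) = (2 : ℝ)⁻¹ • A.map (Int.cast : ℤ → ℝ))
    (hA : IsIdempotentElem (A.map (Int.cast : ℤ → ZMod 2))) (htr : Odd A.trace)
    {d : ℕ} (hd : d ≠ 0) : g ^ d ∉ SL2Zinℝ := by
  intro hmem
  obtain ⟨k, hk⟩ := exists_trace_eq_intCast_of_mem_SL2Zinℝ hmem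
  have hreal : ((A ^ d).trace : ℝ) = 2 ^ d * k := by
    rw [Matrix.SpecialLinearGroup.coe_pow, hg, smul_pow, trace_smul, smul_eq_mul,
      ← trace_map_intCast_pow] at hk
    rw [← hk, ← mul_assoc, ← mul_pow]
    norm_num
  have hint : (A ^ d).trace = 2 ^ d * k := by exact_mod_cast hreal
  obtain ⟨d, rfl⟩ := Nat.exists_eq_succ_of_ne_zero hd
  apply Int.not_even_iff_odd.mpr (odd_trace_pow_of_isIdempotentElem_map_zmod_two hA htr hd)
  rw [hint, pow_succ]
  exact ⟨2 ^ d * k, by ring⟩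

def jigMatrix : Matrix (Fin 2) (Fin 2) ℤ := !![-6, 2; 7, -3]

lemma isIdempotentElem_jigMatrix_map :
    IsIdempotentElem (jigMatrix.map (Int.cast : ℤ → ZMod 2)) := by
  unfold IsIdempotentElem jigMatrix; decide

lemma odd_trace_jigMatrix : Odd jigMatrix.trace := by decide

lemma coe_jigGen_self (m n : ℕ) (hm : 0 < m) :
    ((jigGen m n m : SL2R) : Matrix (Fin 2) (Fin 2) ℝ) = !![-1, -1; 2, 1] := by
  rw [jigGen, if_neg hm.ne', if_pos le_rfl, R]
  ext i j
  fin_cases i <;> fin_cases j <;> norm_num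

lemma coe_jigGen_succ (m n : ℕ) (hn : 0 < n) :
    ((jigGen m n (m + 1) : SL2R) : Matrix (Fin 2) (Fin 2) ℝ) = !![1/2, -1/2; 5/2, -1/2] := by
  rw [jigGen, if_neg m.succ_ne_zero, if_neg (by omega), if_pos (by omega), Nat.add_sub_cancel_left,
    if_pos rfl, R]
  ext i j
  fin_cases i <;> fin_cases j <;> norm_num

lemma coe_jigGen_mul_jigGen_succ (m n : ℕ) (hm : 0 < m) (hn : 0 < n) :
    ((jigGen m n m * jigGen m n (m + 1) : SL2R) : Matrix (Fin 2) (Fin 2) ℝ) =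
      (2 : ℝ)⁻¹ • jigMatrix.map (Int.cast : ℤ → ℝ) := by
  rw [Matrix.SpecialLinearGroup.coe_mul, coe_jigGen_self m n hm, coe_jigGen_succ m n hn]
  ext i j
  fin_cases i <;> fin_cases j <;> norm_num [Matrix.mul_apply, jigMatrix]

lemma jigGen_mem_JGamma (m n : ℕ) {k : ℕ} (hk : k ≤ m + n + 1) : jigGen m n k ∈ JGamma m n :=
  Subgroup.subset_closure ⟨k, hk, rfl⟩

theorem jigsaw_not_commensurable_SL2Z_general (m n : ℕ) (hm : 1 ≤ m) (hn : 1 ≤ n) :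
    ¬ Subgroup.Commensurable (JGamma m n) SL2Zinℝ := by
  intro hcom
  have hmem : jigGen m n m * jigGen m n (m + 1) ∈ JGamma m n :=
    mul_mem (jigGen_mem_JGamma m n (by omega)) (jigGen_mem_JGamma m n (by omega))
  obtain ⟨d, hd, -, hpow, -⟩ := Subgroup.exists_pow_mem_of_relIndex_ne_zero hcom.2 hmem
  exact pow_notMem_SL2Zinℝ_of_coe_eq_inv_two_smul (coe_jigGen_mul_jigGen_succ m n hm hn)
    isIdempotentElem_jigMatrix_map odd_trace_jigMatrix hd.ne' hpow

/-- For `m, n ≥ 1` with `m = 1` or `n = 1`, the jigsaw group `Γ_{m,n}` is not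
commensurable with `SL(2,ℤ)` as subgroups of `SL(2,ℝ)`. -/
theorem jigsaw_not_commensurable_SL2Z (m n : ℕ) (hm : 1 ≤ m) (hn : 1 ≤ n)
    (h : m = 1 ∨ n = 1) :
    ¬ Subgroup.Commensurable (JGamma m n) SL2Zinℝ :=
  jigsaw_not_commensurable_SL2Z_general m n hm hn
end
end
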